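/- A finite connected simple graph G satisfies cdim(G) = 1 if and only if G is the complete graph K_2 on two vertices. -/

import Mathlib

/-!
Suppose `{w}` resolves a connected graph on `n ≥ 3` vertices. The `n - 1` values `κ(u, w)`,
`u ≠ w`, are pairwise distinct and lie in `[1, deg w] ⊆ [1, n - 1]`, so they are exactly
`1, …, n - 1`. Since `κ` is bounded by the degrees at both ends, the vertex `u₁` with
`κ(u₁, w) = n - 1` forces `u₁` and `w` to be universal. But then the vertex `u₀` with
`κ(u₀, w) = 1` has the two internally disjoint paths `u₀w` and `u₀u₁w`. Conversely, on two
vertices `κ(w, w) = ∞` separates `w` from the other vertex, whose connectivity to `w` is finite.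
-/

open SimpleGraph

namespace ConnDim

open Classical in
/-- The local connectivity `κ(a,b)`: the maximum number of internally vertex-disjoint
`a`-`b` paths, with `κ(a,a) = ∞`. -/
noncomputable def localConn {V : Type*} (G : SimpleGraph V) (a b : V) : ℕ∞ :=
  if a = b then ⊤
  else sSup {n : ℕ∞ | ∃ Ps : Finset (G.Path a b),
    (∀ p ∈ Ps, ∀ q ∈ Ps, p ≠ q → ∀ x : V,
        x ∈ p.1.support → x ∈ q.1.support → x = a ∨ x = b) ∧
    (Ps.card : ℕ∞) = n}

/-- A set `W` is connectivity resolving if vertices are determined by their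
local connectivities to the elements of `W`. -/
def ConnResolving {V : Type*} (G : SimpleGraph V) (W : Set V) : Prop :=
  ∀ u v : V, (∀ w ∈ W, localConn G u w = localConn G v w) → u = v

/-- The connectivity dimension: minimum cardinality of a connectivity resolving set. -/
noncomputable def cdim {V : Type*} (G : SimpleGraph V) : ℕ :=
  sInf {n : ℕ | ∃ W : Set V, ConnResolving G W ∧ W.ncard = n}

/-- A set `W` is metric resolving if vertices are determined by their distances
to the elements of `W`. -/
def MetricResolving {V : Type*} (G : SimpleGraph V) (W : Set V) : Prop :=
  ∀ u v : V, (∀ w ∈ W, G.dist u w = G.dist v w) → u = v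

/-- The metric dimension: minimum cardinality of a metric resolving set. -/
noncomputable def mdim {V : Type*} (G : SimpleGraph V) : ℕ :=
  sInf {n : ℕ | ∃ W : Set V, MetricResolving G W ∧ W.ncard = n}

/-- `G` forces a `𝟙` representation if every minimum resolving set (basis) `B` admits a
vertex whose local connectivity to every element of `B` equals `1`. -/
def ForcesOne {V : Type*} (G : SimpleGraph V) : Prop :=
  ∀ B : Set V, ConnResolving G B → B.ncard = cdim G →
    ∃ v : V, ∀ b ∈ B, localConn G v b = 1

/-- A cut vertex of a connected graph: its removal disconnects the graph. -/
def IsCutVertex {V : Type*} (G : SimpleGraph V) (v : V) : Prop :=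
  G.Connected ∧ ¬ (G.induce {u : V | u ≠ v}).Connected

/-- A block of `G`: a maximal connected subgraph of `G` without a cut vertex of itself. -/
def IsBlock {V : Type*} (G : SimpleGraph V) (H : G.Subgraph) : Prop :=
  H.coe.Connected ∧ (∀ v, ¬ IsCutVertex H.coe v) ∧
  ∀ H' : G.Subgraph, H ≤ H' → H'.coe.Connected → (∀ v, ¬ IsCutVertex H'.coe v) → H' = H

/-- The number of blocks of `G`. -/
noncomputable def numBlocks {V : Type*} (G : SimpleGraph V) : ℕ :=
  Nat.card {H : G.Subgraph // IsBlock G H}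

/-- Two vertices are twins if they have the same neighborhood in the graph with
both of them deleted. -/
def AreTwins {V : Type*} (G : SimpleGraph V) (a b : V) : Prop :=
  ∀ x : V, x ≠ a → x ≠ b → (G.Adj a x ↔ G.Adj b x)

/-- The threshold graph generated by a binary sequence `L` (`false` = isolated vertex,
`true` = dominating vertex): two vertices are adjacent iff the later one was added
as a dominating vertex. -/
def thresholdGraph (L : List Bool) : SimpleGraph (Fin L.length) :=
  SimpleGraph.fromRel (fun i j => i < j ∧ L.get j = true)

/-- The alternating binary sequence `0,1,0,1,…,0,1` of length `2 * n`. -/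
def altList (n : ℕ) : List Bool := (List.replicate n [false, true]).flatten

/-- The join of two graphs on disjoint vertex sets by the bridge `v₁v₂`. -/
def bridgeJoin {V₁ V₂ : Type*} (G₁ : SimpleGraph V₁) (G₂ : SimpleGraph V₂)
    (v₁ : V₁) (v₂ : V₂) : SimpleGraph (V₁ ⊕ V₂) :=
  G₁.map Function.Embedding.inl ⊔ G₂.map Function.Embedding.inr
    ⊔ SimpleGraph.fromEdgeSet {s(Sum.inl v₁, Sum.inr v₂)}

/-- The graph obtained from `G` by attaching a new leaf (the vertex `none`) to `u`. -/
def attachLeaf {V : Type*} (G : SimpleGraph V) (u : V) : SimpleGraph (Option V) :=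
  G.map Function.Embedding.some ⊔ SimpleGraph.fromEdgeSet {s(some u, (none : Option V))}

/-- The chain of `t` triangles (triangle `i` has vertices `inl i.castSucc`, `inl i.succ`,
`inr (inl i)`), with a leaf `inr (inr ())` attached to the end vertex `inl 0`. -/
def triChain (t : ℕ) : SimpleGraph (Fin (t+1) ⊕ Fin t ⊕ Unit) :=
  SimpleGraph.fromRel (fun a b =>
    match a, b with
    | Sum.inl i, Sum.inl j => (i : ℕ) + 1 = (j : ℕ)
    | Sum.inr (Sum.inl i), Sum.inl j => j = Fin.castSucc i ∨ j = Fin.succ i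
    | Sum.inr (Sum.inr _), Sum.inl j => j = 0
    | _, _ => False)

section LocalConnectivity

variable {V : Type*} {G : SimpleGraph V} {a b : V}

def IsInternallyDisjoint (Ps : Finset (G.Path a b)) : Prop :=
  ∀ p ∈ Ps, ∀ q ∈ Ps, p ≠ q → ∀ x : V,
    x ∈ p.1.support → x ∈ q.1.support → x = a ∨ x = b

lemma localConn_self (a : V) : localConn G a a = ⊤ := if_pos rfl

lemma card_le_localConn (hab : a ≠ b) {Ps : Finset (G.Path a b)}
    (hPs : IsInternallyDisjoint Ps) : (Ps.card : ℕ∞) ≤ localConn G a b := by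
  rw [localConn, if_neg hab]
  exact le_sSup ⟨Ps, hPs, rfl⟩

lemma localConn_le_of_forall_card_le (hab : a ≠ b) {n : ℕ∞}
    (hn : ∀ Ps : Finset (G.Path a b), IsInternallyDisjoint Ps → (Ps.card : ℕ∞) ≤ n) :
    localConn G a b ≤ n := by
  rw [localConn, if_neg hab]
  exact sSup_le fun _ ⟨Ps, hPs, hcard⟩ => hcard ▸ hn Ps hPs

lemma _root_.SimpleGraph.Path.reverse_injective : Function.Injective (Path.reverse : G.Path a b → G.Path b a) :=
  fun _ _ h => Subtype.ext (Walk.reverse_injective (congrArg Subtype.val h))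

lemma IsInternallyDisjoint.image_reverse [DecidableEq (G.Path b a)] {Ps : Finset (G.Path a b)}
    (hPs : IsInternallyDisjoint Ps) : IsInternallyDisjoint (Ps.image Path.reverse) := by
  simp only [IsInternallyDisjoint, Finset.mem_image]
  rintro _ ⟨p, hp, rfl⟩ _ ⟨q, hq, rfl⟩ hpq x hxp hxq
  simp only [Path.reverse_coe, Walk.support_reverse, List.mem_reverse] at hxp hxq
  exact (hPs p hp q hq (fun h => hpq (h ▸ rfl)) x hxp hxq).symm

lemma localConn_le_localConn_swap : localConn G a b ≤ localConn G b a := by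
  classical
  rcases eq_or_ne a b with rfl | hab
  · rfl
  refine localConn_le_of_forall_card_le hab fun Ps hPs => ?_
  rw [← Finset.card_image_of_injective Ps Path.reverse_injective]
  exact card_le_localConn hab.symm hPs.image_reverse

lemma localConn_comm (a b : V) : localConn G a b = localConn G b a :=
  le_antisymm localConn_le_localConn_swap localConn_le_localConn_swap

lemma _root_.SimpleGraph.Path.eq_singleton_of_snd_eq {p : G.Path a b} (hab : G.Adj a b) (hp : p.1.snd = b) :
    p = Path.singleton hab := by
  have hmem : s(a, b) ∈ p.1.edges := by
    simpa [hp] using p.1.mk_start_snd_mem_edges (Walk.not_nil_of_ne hab.ne)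
  exact Subtype.ext (p.2.eq_adj_toWalk_of_mem_edges hmem)

/-- Distinct paths of an internally disjoint family leave `a` through distinct neighbours,
since a shared second vertex is internal unless both paths are the edge `ab`. -/
lemma IsInternallyDisjoint.card_le_degree [Fintype V] [DecidableRel G.Adj] (hab : a ≠ b)
    {Ps : Finset (G.Path a b)} (hPs : IsInternallyDisjoint Ps) : Ps.card ≤ G.degree a := by
  rw [← card_neighborFinset_eq_degree]
  refine Finset.card_le_card_of_injOn (fun p => p.1.snd)
    (fun p _ => (mem_neighborFinset _ _ _).2 (p.1.adj_snd (Walk.not_nil_of_ne hab))) ?_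
  intro p hp q hq hpq
  by_contra hne
  have hsnd : p.1.snd = q.1.snd := hpq
  rcases hPs p hp q hq hne p.1.snd (p.1.getVert_mem_support 1)
      (hsnd ▸ q.1.getVert_mem_support 1) with ha | hb
  · exact G.irrefl (ha ▸ p.1.adj_snd (Walk.not_nil_of_ne hab))
  · have hadj : G.Adj a b := hb ▸ p.1.adj_snd (Walk.not_nil_of_ne hab)
    exact hne ((Path.eq_singleton_of_snd_eq hadj hb).trans
      (Path.eq_singleton_of_snd_eq hadj (hsnd ▸ hb)).symm)

lemma localConn_le_degree [Fintype V] [DecidableRel G.Adj] (hab : a ≠ b) :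
    localConn G a b ≤ G.degree a :=
  localConn_le_of_forall_card_le hab fun _ hPs => by exact_mod_cast hPs.card_le_degree hab

lemma localConn_ne_top [Finite V] (hab : a ≠ b) : localConn G a b ≠ ⊤ := by
  classical
  have := Fintype.ofFinite V
  exact ne_top_of_le_ne_top (ENat.natCast_ne_top _) (localConn_le_degree hab)

lemma one_le_localConn (hab : a ≠ b) (h : G.Reachable a b) : 1 ≤ localConn G a b := by
  classical
  obtain ⟨p⟩ := h
  have hPs : IsInternallyDisjoint {p.toPath} := by
    intro p hp q hq hpq
    exact absurd ((Finset.mem_singleton.1 hp).trans (Finset.mem_singleton.1 hq).symm) hpq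
  simpa using card_le_localConn hab hPs

lemma two_le_localConn {c : V} (hab : G.Adj a b) (hac : G.Adj a c) (hcb : G.Adj c b) :
    2 ≤ localConn G a b := by
  classical
  let direct : G.Path a b := Path.singleton hab
  let viaC : G.Path a b := ⟨Walk.cons hac (Walk.cons hcb Walk.nil), by
    simp [Walk.isPath_def, hab.ne, hac.ne, hcb.ne]⟩
  have hdirect : ∀ x ∈ direct.1.support, x = a ∨ x = b := by simp [direct, Path.singleton]
  have hne : direct ≠ viaC := fun h => by
    simpa [direct, viaC, Path.singleton, hcb.ne] using congrArg (·.1.support) h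
  have hPs : IsInternallyDisjoint {direct, viaC} := by
    simp only [IsInternallyDisjoint, Finset.mem_insert, Finset.mem_singleton]
    rintro p (rfl | rfl) q (rfl | rfl) hpq x hxp hxq
    · exact absurd rfl hpq
    · exact hdirect x hxp
    · exact hdirect x hxq
    · exact absurd rfl hpq
  simpa [Finset.card_pair hne] using card_le_localConn hab.ne hPs

lemma isUniversal_of_card_sub_one_le_localConn [Fintype V] [DecidableRel G.Adj] (hab : a ≠ b)
    (h : ((Fintype.card V - 1 : ℕ) : ℕ∞) ≤ localConn G a b) : G.IsUniversal a :=
  (G.degree_eq_card_sub_one a).1 <| le_antisymm (Nat.le_sub_one_of_lt (G.degree_lt_card_verts a))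
    (by exact_mod_cast h.trans (localConn_le_degree hab))

end LocalConnectivity

lemma _root_.Nat.sInf_eq_one_iff {s : Set ℕ} : sInf s = 1 ↔ 0 ∉ s ∧ 1 ∈ s := by
  refine ⟨fun h => ⟨fun h0 => ?_, h ▸ Nat.sInf_mem (Nat.nonempty_of_pos_sInf (by omega))⟩,
    fun ⟨h0, h1⟩ => le_antisymm (Nat.sInf_le h1) (Nat.one_le_iff_ne_zero.2 fun hz => ?_)⟩
  · simp [Nat.sInf_eq_zero.2 (Or.inl h0)] at h
  · rcases Nat.sInf_eq_zero.1 hz with h | rfl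
    exacts [h0 h, h1]

section Resolving

open Finset

variable {V : Type*} {G : SimpleGraph V}

lemma eq_or_eq_of_card_le_two [Fintype V] (hV : Fintype.card V ≤ 2) {x y : V} (hxy : x ≠ y)
    (z : V) : z = x ∨ z = y := by
  by_contra! h
  exact (Fintype.two_lt_card_iff.2 ⟨x, y, z, hxy, h.1.symm, h.2.symm⟩).not_ge hV

lemma connResolving_empty_iff : ConnResolving G ∅ ↔ Subsingleton V :=
  ⟨fun h => ⟨fun u v => h u v (by simp)⟩, fun _ u v _ => Subsingleton.elim u v⟩

lemma connResolving_singleton_iff {w : V} :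
    ConnResolving G {w} ↔ Function.Injective (localConn G · w) := by
  simp [ConnResolving, Function.Injective]

lemma cdim_eq_one_iff [Finite V] : cdim G = 1 ↔ Nontrivial V ∧ ∃ w, ConnResolving G {w} := by
  have hzero : ConnResolving G ∅ ↔ 0 ∈ {n | ∃ W : Set V, ConnResolving G W ∧ W.ncard = n} :=
    ⟨fun h => ⟨∅, h, Set.ncard_empty V⟩, fun ⟨W, hW, h0⟩ =>
      (Set.ncard_eq_zero (Set.toFinite W)).1 h0 ▸ hW⟩
  have hone : (∃ w, ConnResolving G {w}) ↔ 1 ∈ {n | ∃ W : Set V, ConnResolving G W ∧ W.ncard = n} :=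
    ⟨fun ⟨w, hw⟩ => ⟨{w}, hw, Set.ncard_singleton w⟩, fun ⟨W, hW, h1⟩ => by
      obtain ⟨w, rfl⟩ := Set.ncard_eq_one.1 h1
      exact ⟨w, hW⟩⟩
  rw [← not_subsingleton_iff_nontrivial, ← connResolving_empty_iff, hzero, hone, cdim,
    Nat.sInf_eq_one_iff]

lemma card_le_two_of_connResolving_singleton [Fintype V] (hG : G.Connected) {w : V}
    (hw : ConnResolving G {w}) : Fintype.card V ≤ 2 := by
  classical
  by_contra! hV
  set n := Fintype.card V
  set κ : V → ℕ := fun u => (localConn G u w).toNat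
  have hκ : ∀ u ≠ w, (κ u : ℕ∞) = localConn G u w :=
    fun u hu => ENat.natCast_toNat (localConn_ne_top hu)
  have hinj : Set.InjOn κ (univ.erase w) := fun u hu v hv huv => by
    refine connResolving_singleton_iff.1 hw ?_
    simp only [← hκ u (Finset.ne_of_mem_erase hu), ← hκ v (Finset.ne_of_mem_erase hv), huv]
  have hmaps : ∀ u ∈ univ.erase w, κ u ∈ Icc 1 (n - 1) := fun u hu => by
    have huw := Finset.ne_of_mem_erase hu
    have hlo := one_le_localConn huw (hG.preconnected u w)
    have hhi := (localConn_comm (G := G) u w ▸ localConn_le_degree huw.symm).trans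
      (Nat.cast_le.2 (Nat.le_sub_one_of_lt (G.degree_lt_card_verts w)))
    rw [← hκ u huw] at hlo hhi
    exact Finset.mem_Icc.2 ⟨by exact_mod_cast hlo, by exact_mod_cast hhi⟩
  have himage : (univ.erase w).image κ = Icc 1 (n - 1) :=
    Finset.eq_of_subset_of_card_le (Finset.image_subset_iff.2 hmaps) (by
      rw [Finset.card_image_of_injOn hinj, Finset.card_erase_of_mem (mem_univ w), card_univ,
        Nat.card_Icc]; omega)
  obtain ⟨u₀, hu₀, hκu₀⟩ := Finset.mem_image.1 (himage ▸ Finset.mem_Icc.2 ⟨le_rfl, by omega⟩ :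
    1 ∈ (univ.erase w).image κ)
  obtain ⟨u₁, hu₁, hκu₁⟩ := Finset.mem_image.1 (himage ▸ Finset.mem_Icc.2 ⟨by omega, le_rfl⟩ :
    n - 1 ∈ (univ.erase w).image κ)
  have hu₀w := Finset.ne_of_mem_erase hu₀
  have hu₁w := Finset.ne_of_mem_erase hu₁
  have hu₀u₁ : u₀ ≠ u₁ := fun h => by rw [h, hκu₁] at hκu₀; omega
  have hκu₁' : ((n - 1 : ℕ) : ℕ∞) ≤ localConn G u₁ w := (hκu₁ ▸ hκ u₁ hu₁w).le
  have hwU := isUniversal_of_card_sub_one_le_localConn hu₁w.symm (localConn_comm u₁ w ▸ hκu₁')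
  have hu₁U := isUniversal_of_card_sub_one_le_localConn hu₁w hκu₁'
  have htwo := two_le_localConn (hwU hu₀w.symm).symm (hu₁U hu₀u₁.symm).symm (hu₁U hu₁w)
  rw [← hκ u₀ hu₀w, hκu₀] at htwo
  exact absurd htwo (by decide)

lemma connResolving_singleton_of_card_le_two [Fintype V] (hV : Fintype.card V ≤ 2) (w : V) :
    ConnResolving G {w} := by
  refine connResolving_singleton_iff.2 fun u v huv => ?_
  by_contra hne
  rcases eq_or_eq_of_card_le_two hV hne w with rfl | rfl
  · exact localConn_ne_top (Ne.symm hne) (huv.symm.trans (localConn_self _))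
  · exact localConn_ne_top hne (huv.trans (localConn_self _))

lemma nonempty_iso_completeGraph_fin_two_iff [Fintype V] (hG : G.Connected) :
    Nonempty (G ≃g completeGraph (Fin 2)) ↔ Fintype.card V = 2 := by
  refine ⟨fun ⟨φ⟩ => by simpa using Fintype.card_congr φ.toEquiv, fun hV => ?_⟩
  have hG_top : G = ⊤ := by
    ext x y
    refine ⟨Adj.ne, fun hxy => ?_⟩
    obtain ⟨p⟩ := hG.preconnected x y
    have hsnd := p.adj_snd (Walk.not_nil_of_ne hxy)
    rcases eq_or_eq_of_card_le_two hV.le hxy p.snd with h | h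
    · exact absurd h hsnd.ne'
    · rwa [h] at hsnd
  subst hG_top
  exact ⟨Iso.completeGraph (Fintype.equivFinOfCardEq hV)⟩

end Resolving

/-- a finite connected graph has connectivity dimension one iff it is `K₂`. -/
theorem stmt1 {V : Type*} [Fintype V] (G : SimpleGraph V) (hG : G.Connected) :
    cdim G = 1 ↔ Nonempty (G ≃g completeGraph (Fin 2)) := by
  rw [cdim_eq_one_iff, nonempty_iso_completeGraph_fin_two_iff hG,
    ← Fintype.one_lt_card_iff_nontrivial]
  constructor
  · rintro ⟨hV, w, hw⟩
    have := card_le_two_of_connResolving_singleton hG hw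
    omega
  · intro hV
    have : Nonempty V := Fintype.card_pos_iff.1 (by omega)
    exact ⟨by omega, Classical.arbitrary V, connResolving_singleton_of_card_le_two hV.le _⟩

end ConnDim
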